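/- arXiv:0811.1376 — 3 statements merged into one kernel-verified Lean document; each statement's English description precedes it below -/
import Mathlib

section
/- Given φ ∈ C_c^∞(ℝ) supported in B_1(0) with ∫φ = 1, ∫ x^k φ = 0 for 1 ≤ k ≤ m−1, and ∫|φ| ≤ 1 + η/2, define for 0 < μ < 1 the function ψ = aφ + bφ(·/μ) with a = −μ^m/(1 − μ^m) and b = 1/(μ − μ^{m+1}). Then ∫ψ = 1, ∫ x^k ψ = 0 for all 1 ≤ k ≤ m, and ∫|ψ| ≤ ((1 + μ^m)/(1 − μ^m))(1 + η/2); in particular, for μ sufficiently small, ∫|ψ| ≤ 1 + η. -/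
open MeasureTheory Filter Set Metric

/-- Induction step in the construction of admissible mollifiers:
given `φ ∈ C_c^∞(ℝ)` supported in `B̄₁(0)` with `∫φ = 1`, vanishing moments up to
order `m − 1`, and `∫|φ| ≤ 1 + η/2`, the function
`ψ = aφ + bφ(·/μ)` with `a = −μ^m/(1 − μ^m)`, `b = 1/(μ − μ^{m+1})` satisfies
`∫ψ = 1`, vanishing moments up to order `m`, and
`∫|ψ| ≤ ((1 + μ^m)/(1 − μ^m))(1 + η/2)`; in particular, for `μ` small enough,
`∫|ψ| ≤ 1 + η`. -/
theorem mollifier_induction_step (m : ℕ) (hm : 1 ≤ m) (η : ℝ) (hη : 0 < η)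
    (φ : ℝ → ℝ) (hφs : ContDiff ℝ (⊤ : ℕ∞) φ) (hφc : HasCompactSupport φ)
    (hφsupp : tsupport φ ⊆ Metric.closedBall 0 1)
    (hφint : ∫ x, φ x = 1)
    (hφmom : ∀ k : ℕ, 1 ≤ k → k ≤ m - 1 → ∫ x, x ^ k * φ x = 0)
    (hφl1 : ∫ x, |φ x| ≤ 1 + η / 2) :
    (∀ μ : ℝ, 0 < μ → μ < 1 →
      (∫ x, (-μ ^ m / (1 - μ ^ m)) * φ x + (1 / (μ - μ ^ (m + 1))) * φ (x / μ) = 1) ∧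
      (∀ k : ℕ, 1 ≤ k → k ≤ m →
        ∫ x, x ^ k *
          ((-μ ^ m / (1 - μ ^ m)) * φ x + (1 / (μ - μ ^ (m + 1))) * φ (x / μ)) = 0) ∧
      (∫ x, |(-μ ^ m / (1 - μ ^ m)) * φ x + (1 / (μ - μ ^ (m + 1))) * φ (x / μ)| ≤
        ((1 + μ ^ m) / (1 - μ ^ m)) * (1 + η / 2))) ∧
    ∃ μ₀ > (0:ℝ), ∀ μ : ℝ, 0 < μ → μ < μ₀ →
      ∫ x, |(-μ ^ m / (1 - μ ^ m)) * φ x + (1 / (μ - μ ^ (m + 1))) * φ (x / μ)| ≤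
        1 + η := by
  have hφcont : Continuous φ := hφs.continuous
  have hφI : Integrable φ := hφcont.integrable_of_hasCompactSupport hφc
  have hmomI : ∀ k : ℕ, Integrable (fun x : ℝ => x ^ k * φ x) := fun k =>
    ((continuous_pow k).mul hφcont).integrable_of_hasCompactSupport
      (hφc.mul_left)
  -- main per-μ statement
  have main : ∀ μ : ℝ, 0 < μ → μ < 1 →
      (∫ x, (-μ ^ m / (1 - μ ^ m)) * φ x + (1 / (μ - μ ^ (m + 1))) * φ (x / μ) = 1) ∧
      (∀ k : ℕ, 1 ≤ k → k ≤ m →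
        ∫ x, x ^ k *
          ((-μ ^ m / (1 - μ ^ m)) * φ x + (1 / (μ - μ ^ (m + 1))) * φ (x / μ)) = 0) ∧
      (∫ x, |(-μ ^ m / (1 - μ ^ m)) * φ x + (1 / (μ - μ ^ (m + 1))) * φ (x / μ)| ≤
        ((1 + μ ^ m) / (1 - μ ^ m)) * (1 + η / 2)) := by
    intro μ hμ0 hμ1
    have hμne : μ ≠ 0 := ne_of_gt hμ0
    have hμm : μ ^ m < 1 := pow_lt_one₀ hμ0.le hμ1 (by omega)
    have h1m : 0 < 1 - μ ^ m := by linarith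
    have hden : μ - μ ^ (m + 1) = μ * (1 - μ ^ m) := by ring
    have hdpos : 0 < μ - μ ^ (m + 1) := by rw [hden]; positivity
    set A : ℝ := -μ ^ m / (1 - μ ^ m) with hA
    set B : ℝ := 1 / (μ - μ ^ (m + 1)) with hB
    have hIcompφ : Integrable (fun x : ℝ => φ (x / μ)) := hφI.comp_div hμne
    have hintφμ : (∫ x, φ (x / μ)) = μ * ∫ x, φ x := by
      rw [MeasureTheory.Measure.integral_comp_div φ μ, abs_of_pos hμ0, smul_eq_mul]
    -- moment scaling
    have hmomμ : ∀ k : ℕ, (∫ x, x ^ k * φ (x / μ)) = μ ^ (k + 1) * ∫ x, x ^ k * φ x := by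
      intro k
      have h1 : (fun x : ℝ => x ^ k * φ (x / μ)) =
          fun x : ℝ => (fun y : ℝ => (μ * y) ^ k * φ y) (x / μ) := by
        funext x
        simp only []
        rw [mul_div_cancel₀ x hμne]
      rw [h1, MeasureTheory.Measure.integral_comp_div (fun y : ℝ => (μ * y) ^ k * φ y) μ,
        abs_of_pos hμ0, smul_eq_mul]
      have h2 : (∫ y, (μ * y) ^ k * φ y) = μ ^ k * ∫ y, y ^ k * φ y := by
        rw [← integral_const_mul]
        congr 1; funext y; ring
      rw [h2]; ring
    have hmomμI : ∀ k : ℕ, Integrable (fun x : ℝ => x ^ k * φ (x / μ)) := by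
      intro k
      have h1 : (fun x : ℝ => x ^ k * φ (x / μ)) =
          fun x : ℝ => (fun y : ℝ => (μ * y) ^ k * φ y) (x / μ) := by
        funext x
        simp only []
        rw [mul_div_cancel₀ x hμne]
      rw [h1]
      apply (((hmomI k).const_mul (μ ^ k)).comp_div hμne).congr
      filter_upwards with x
      field_simp
      rw [div_pow]; field_simp
    refine ⟨?_, ?_, ?_⟩
    · rw [integral_add (hφI.const_mul A) (hIcompφ.const_mul B),
        integral_const_mul, integral_const_mul, hintφμ, hφint]
      rw [hA, hB, hden]
      field_simp
      ring
    · intro k hk1 hkm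
      have distrib : (fun x : ℝ => x ^ k * (A * φ x + B * φ (x / μ))) =
          fun x : ℝ => A * (x ^ k * φ x) + B * (x ^ k * φ (x / μ)) := by
        funext x; ring
      rw [distrib, integral_add ((hmomI k).const_mul A) ((hmomμI k).const_mul B),
        integral_const_mul, integral_const_mul, hmomμ k]
      rcases eq_or_lt_of_le hkm with hkm' | hkm'
      · subst hkm'
        have : A + B * μ ^ (k + 1) = 0 := by
          rw [hA, hB, hden]
          field_simp
          ring
        linear_combination (∫ x, x ^ k * φ x) * this
      · rw [hφmom k hk1 (by omega)]
        ring
    · have habs : (∫ x, |A * φ x + B * φ (x / μ)|) ≤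
          ∫ x, |A| * |φ x| + |B| * |φ (x / μ)| := by
        apply integral_mono ((hφI.const_mul A).add (hIcompφ.const_mul B)).abs
          ((hφI.abs.const_mul |A|).add (hIcompφ.abs.const_mul |B|))
        intro x
        calc |A * φ x + B * φ (x / μ)| ≤ |A * φ x| + |B * φ (x / μ)| := abs_add_le _ _
          _ = |A| * |φ x| + |B| * |φ (x / μ)| := by rw [abs_mul, abs_mul]
      have habsμ : (∫ x, |φ (x / μ)|) = μ * ∫ x, |φ x| := by
        rw [MeasureTheory.Measure.integral_comp_div (fun y => |φ y|) μ, abs_of_pos hμ0, smul_eq_mul]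
      have hAabs : |A| = μ ^ m / (1 - μ ^ m) := by
        rw [hA, abs_div, abs_of_pos h1m, abs_neg, abs_of_pos (pow_pos hμ0 m)]
      have hBabs : |B| = 1 / (μ - μ ^ (m + 1)) := by
        rw [hB, abs_div, abs_one, abs_of_pos hdpos]
      have hsum : (∫ x, |A| * |φ x| + |B| * |φ (x / μ)|) =
          (|A| + |B| * μ) * ∫ x, |φ x| := by
        rw [integral_add (hφI.abs.const_mul |A|) (hIcompφ.abs.const_mul |B|),
          integral_const_mul, integral_const_mul, habsμ]
        ring
      have hcoef : |A| + |B| * μ = (1 + μ ^ m) / (1 - μ ^ m) := by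
        rw [hAabs, hBabs, hden]
        field_simp
        ring
      have hφL1nonneg : (0:ℝ) ≤ ∫ x, |φ x| :=
        integral_nonneg fun x => abs_nonneg _
      have hcoefpos : (0:ℝ) ≤ (1 + μ ^ m) / (1 - μ ^ m) := by positivity
      calc (∫ x, |A * φ x + B * φ (x / μ)|)
          ≤ ∫ x, |A| * |φ x| + |B| * |φ (x / μ)| := habs
        _ = (|A| + |B| * μ) * ∫ x, |φ x| := hsum
        _ = ((1 + μ ^ m) / (1 - μ ^ m)) * ∫ x, |φ x| := by rw [hcoef]
        _ ≤ ((1 + μ ^ m) / (1 - μ ^ m)) * (1 + η / 2) :=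
            mul_le_mul_of_nonneg_left hφl1 hcoefpos
  refine ⟨main, ?_⟩
  refine ⟨min 1 (η / (4 + 3 * η)), lt_min one_pos (by positivity), ?_⟩
  intro μ hμ0 hμlt
  have hμ1 : μ < 1 := lt_of_lt_of_le hμlt (min_le_left _ _)
  have hμη : μ < η / (4 + 3 * η) := lt_of_lt_of_le hμlt (min_le_right _ _)
  have ht : μ ^ m ≤ μ := pow_le_of_le_one hμ0.le hμ1.le (by omega)
  have htη : μ ^ m * (4 + 3 * η) ≤ η := by
    have h4 : (0:ℝ) < 4 + 3 * η := by linarith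
    have h5 : μ * (4 + 3 * η) < η := (lt_div_iff₀ h4).mp hμη
    nlinarith [ht, h4]
  have hμm : μ ^ m < 1 := pow_lt_one₀ hμ0.le hμ1 (by omega)
  have h1m : 0 < 1 - μ ^ m := by linarith
  have hfinal : ((1 + μ ^ m) / (1 - μ ^ m)) * (1 + η / 2) ≤ 1 + η := by
    rw [div_mul_eq_mul_div, div_le_iff₀ h1m]
    nlinarith [htη]
  exact le_trans ((main μ hμ0 hμ1).2.2) hfinal
end

section
/- Let f ∈ L^∞_loc(Ω) with f > 0 almost everywhere and f locally uniformly bounded away from zero (∀ K compact ∃ C_K > 0: f ≥ C_K a.e. on K). Let (ρ_ε) be an admissible mollifier, i.e. a strict delta net with the additional property that for every η > 0, ∫|ρ_ε| ≤ 1 + η for all small ε. Then the smoothings f_ε = f * ρ_ε are locally uniformly bounded away from zero: for every compact L ⊆ Ω there exist C'_L > 0 and ε₀(L) such that f_ε(x) ≥ C'_L for all x ∈ L and all ε ≤ ε₀(L). -/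
open MeasureTheory Filter Set Metric

/-- Convolution `f * ψ` on `ℝⁿ`. -/
noncomputable def conv {n : ℕ} (f ψ : (Fin n → ℝ) → ℝ) (x : Fin n → ℝ) : ℝ :=
  ∫ y, f (x - y) * ψ y

/-- `f ∈ L^∞_loc(Ω)`: locally essentially bounded on `Ω`. -/
def LocBdd {n : ℕ} (Ω : Set (Fin n → ℝ)) (f : (Fin n → ℝ) → ℝ) : Prop :=
  ∀ K ⊆ Ω, IsCompact K → ∃ C : ℝ, ∀ᵐ x, x ∈ K → |f x| ≤ C

/-- `f ∈ L^p_loc(Ω)`. -/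
def LocLp {n : ℕ} (Ω : Set (Fin n → ℝ)) (p : ENNReal) (f : (Fin n → ℝ) → ℝ) : Prop :=
  ∀ K ⊆ Ω, IsCompact K → MemLp f p (volume.restrict K)

/-- `g` is the weak `j`-th partial derivative of `f` on `Ω`. -/
def HasWeakDeriv {n : ℕ} (Ω : Set (Fin n → ℝ)) (f : (Fin n → ℝ) → ℝ) (j : Fin n)
    (g : (Fin n → ℝ) → ℝ) : Prop :=
  ∀ φ : (Fin n → ℝ) → ℝ, ContDiff ℝ (⊤ : ℕ∞) φ → HasCompactSupport φ → tsupport φ ⊆ Ω →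
    ∫ x, f x * fderiv ℝ φ x (Pi.single j 1) = - ∫ x, g x * φ x


/-- A strict delta net `(ψ_ε)_{ε ∈ (0,1]}` on `ℝⁿ`. -/
structure StrictDeltaNet (n : ℕ) (ψ : ℝ → (Fin n → ℝ) → ℝ) : Prop where
  smooth : ∀ ε ∈ Set.Ioc (0:ℝ) 1, ContDiff ℝ (⊤ : ℕ∞) (ψ ε)
  cpt_supp : ∀ ε ∈ Set.Ioc (0:ℝ) 1, HasCompactSupport (ψ ε)
  supp_shrink : ∀ δ > (0:ℝ), ∃ ε₀ > (0:ℝ), ∀ ε ∈ Set.Ioc (0:ℝ) 1, ε ≤ ε₀ →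
    tsupport (ψ ε) ⊆ Metric.closedBall 0 δ
  integral_one : Filter.Tendsto (fun ε => ∫ x, ψ ε x) (nhdsWithin 0 (Set.Ioc 0 1)) (nhds 1)
  l1_bound : ∃ C : ℝ, ∀ ε ∈ Set.Ioc (0:ℝ) 1, ∫ x, |ψ ε x| ≤ C

/-- Admissible mollifier: a strict delta net whose negative part has arbitrarily
small `L¹` norm, i.e. `∫|ψ_ε| ≤ 1 + η` eventually, for every `η > 0`. -/
def Admissible {n : ℕ} (ψ : ℝ → (Fin n → ℝ) → ℝ) : Prop :=
  StrictDeltaNet n ψ ∧ ∀ η > (0:ℝ), ∃ ε₀ > (0:ℝ), ∀ ε ∈ Set.Ioc (0:ℝ) 1, ε ≤ ε₀ →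
    ∫ x, |ψ ε x| ≤ 1 + η


/-- Positivity preservation: if `f ∈ L^∞_loc(Ω)` is a.e. positive and
locally uniformly bounded away from zero, and `(ρ_ε)` is an admissible mollifier, then
the smoothings `f_ε = f * ρ_ε` are locally uniformly bounded away from zero: for every
compact `L ⊆ Ω` there are `C'_L > 0` and `ε₀(L) > 0` with `f_ε(x) ≥ C'_L` for all
`x ∈ L` and `ε ≤ ε₀(L)`. -/
theorem smoothing_preserves_positivity {n : ℕ}
    (Ω : Set (Fin n → ℝ)) (hΩ : IsOpen Ω)
    (ρ : ℝ → (Fin n → ℝ) → ℝ) (hρ : Admissible ρ)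
    (f : (Fin n → ℝ) → ℝ) (hfi : LocallyIntegrableOn f Ω) (hfb : LocBdd Ω f)
    (hpos : ∀ᵐ x, x ∈ Ω → 0 < f x)
    (haway : ∀ K ⊆ Ω, IsCompact K → ∃ C > (0:ℝ), ∀ᵐ x, x ∈ K → C ≤ f x) :
    ∀ L ⊆ Ω, IsCompact L → ∃ C' > (0:ℝ), ∃ ε₀ > (0:ℝ),
      ∀ ε ∈ Set.Ioc (0:ℝ) 1, ε ≤ ε₀ → ∀ x ∈ L, C' ≤ conv f (ρ ε) x := by
  obtain ⟨hnet, hadm⟩ := hρ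
  intro L hLΩ hL
  obtain ⟨δ, hδpos, hKΩ⟩ := hL.exists_cthickening_subset_open hΩ hLΩ
  set K : Set (Fin n → ℝ) := cthickening δ L with hKdef
  have hKcpt : IsCompact K := hL.cthickening
  obtain ⟨C, hCpos, hCle⟩ := haway K hKΩ hKcpt
  obtain ⟨M₀, hM₀⟩ := hfb K hKΩ hKcpt
  set M : ℝ := max M₀ C with hMdef
  have hMC : C ≤ M := le_max_right _ _
  set η : ℝ := min (1/4) (C / (4 * (M - C + 1))) with hηdef
  have hMC1 : (0:ℝ) < 4 * (M - C + 1) := by nlinarith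
  have hηpos : 0 < η := lt_min (by norm_num) (div_pos hCpos hMC1)
  have hη14 : η ≤ 1/4 := min_le_left _ _
  have hηkey : (M - C) * η ≤ C / 4 := by
    have h1 : η ≤ C / (4 * (M - C + 1)) := min_le_right _ _
    rw [le_div_iff₀ hMC1] at h1
    nlinarith [hηpos.le]
  obtain ⟨ε₁, hε₁pos, hε₁⟩ := hnet.supp_shrink δ hδpos
  obtain ⟨ε₂, hε₂pos, hε₂⟩ := Metric.tendsto_nhdsWithin_nhds.1 hnet.integral_one η hηpos
  obtain ⟨ε₃, hε₃pos, hε₃⟩ := hadm η hηpos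
  refine ⟨C / 2, by linarith, min (min ε₁ (ε₂ / 2)) ε₃,
    lt_min (lt_min hε₁pos (by linarith)) hε₃pos, ?_⟩
  intro ε hε hεle x hxL
  have hεε₁ : ε ≤ ε₁ := le_trans hεle (le_trans (min_le_left _ _) (min_le_left _ _))
  have hεε₂ : ε < ε₂ := by
    have : ε ≤ ε₂ / 2 := le_trans hεle (le_trans (min_le_left _ _) (min_le_right _ _))
    linarith
  have hεε₃ : ε ≤ ε₃ := le_trans hεle (min_le_right _ _)
  set r : (Fin n → ℝ) → ℝ := ρ ε with hrdef
  have hrc : Continuous r := (hnet.smooth ε hε).continuous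
  have hrs : HasCompactSupport r := hnet.cpt_supp ε hε
  have hrsupp : tsupport r ⊆ Metric.closedBall 0 δ := hε₁ ε hε hεε₁
  have hrint : Integrable r := hrc.integrable_of_hasCompactSupport hrs
  have hIclose : |(∫ z, r z) - 1| < η := by
    have := hε₂ hε (by simpa [Real.dist_eq, abs_of_pos hε.1] using hεε₂)
    simpa [Real.dist_eq] using this
  have hAbs : ∫ z, |r z| ≤ 1 + η := hε₃ ε hε hεε₃
  set S : Set (Fin n → ℝ) := Metric.closedBall 0 δ with hSdef
  have hScpt : IsCompact S := isCompact_closedBall _ _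
  have hgeo : ∀ y ∈ S, x - y ∈ K := by
    intro y hy
    refine mem_cthickening_of_dist_le (x - y) x δ L hxL ?_
    have hd : dist (x - y) x = ‖y‖ := by rw [dist_eq_norm]; simp
    rw [hd]
    simpa [dist_eq_norm] using mem_closedBall_iff_norm.1 hy
  have hfK : IntegrableOn f K := hfi.integrableOn_compact_subset hKΩ hKcpt
  have mp : MeasurePreserving (fun y : Fin n → ℝ => x - y) volume volume :=
    Measure.measurePreserving_sub_left volume x
  have hKm : MeasurableSet K := hKcpt.isClosed.measurableSet
  have mp2 : MeasurePreserving (fun y : Fin n → ℝ => x - y)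
      (volume.restrict ((fun y : Fin n → ℝ => x - y) ⁻¹' K)) (volume.restrict K) :=
    mp.restrict_preimage hKm
  have hfcomp : IntegrableOn (fun y => f (x - y)) ((fun y : Fin n → ℝ => x - y) ⁻¹' K) :=
    (mp2.integrable_comp hfK.aestronglyMeasurable).2 hfK
  have hSsub : S ⊆ (fun y : Fin n → ℝ => x - y) ⁻¹' K := fun y hy => hgeo y hy
  have hfS : IntegrableOn (fun y => f (x - y)) S := hfcomp.mono_set hSsub
  have hgint : IntegrableOn (fun y => f (x - y) * r y) S := by
    obtain ⟨B, hB⟩ := hrs.exists_bound_of_continuous hrc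
    have h1 := hfS.bdd_mul hrc.aestronglyMeasurable (Filter.Eventually.of_forall hB)
    exact h1.congr (Filter.Eventually.of_forall fun y => mul_comm _ _)
  set h : (Fin n → ℝ) → ℝ := fun y => C * r y - (M - C) * max (-(r y)) 0 with hhdef
  have hhc : Continuous h :=
    (continuous_const.mul hrc).sub (continuous_const.mul ((hrc.neg).max continuous_const))
  have hhint : IntegrableOn h S := hhc.continuousOn.integrableOn_compact hScpt
  have haeK : ∀ᵐ z, z ∈ K → C ≤ f z ∧ |f z| ≤ M₀ := by
    filter_upwards [hCle, hM₀] with z h1 h2 hz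
    exact ⟨h1 hz, h2 hz⟩
  have haeY : ∀ᵐ y, (x - y ∈ K → C ≤ f (x - y) ∧ |f (x - y)| ≤ M₀) :=
    mp.quasiMeasurePreserving.ae haeK
  have hineq : ∀ᵐ y, h y ≤ f (x - y) * r y := by
    filter_upwards [haeY] with y hy
    by_cases hyt : y ∈ tsupport r
    · obtain ⟨h1, h2⟩ := hy (hgeo y (hrsupp hyt))
      have hfM : f (x - y) ≤ M := le_trans (le_abs_self _) (h2.trans (le_max_left _ _))
      rcases le_or_gt 0 (r y) with hr0 | hr0
      · have hmax : max (-(r y)) 0 = 0 := max_eq_right (by linarith)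
        have hm := mul_le_mul_of_nonneg_right h1 hr0
        show C * r y - (M - C) * max (-(r y)) 0 ≤ f (x - y) * r y
        rw [hmax]; linarith
      · have hmax : max (-(r y)) 0 = -(r y) := max_eq_left (by linarith)
        have hm := mul_le_mul_of_nonpos_right hfM hr0.le
        show C * r y - (M - C) * max (-(r y)) 0 ≤ f (x - y) * r y
        rw [hmax]; nlinarith
    · have hr0 : r y = 0 := image_eq_zero_of_notMem_tsupport hyt
      show C * r y - (M - C) * max (-(r y)) 0 ≤ f (x - y) * r y
      simp [hr0]
  have hconv : conv f (ρ ε) x = ∫ y in S, f (x - y) * r y := by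
    have he : conv f (ρ ε) x = ∫ y, f (x - y) * r y := rfl
    rw [he]
    refine (setIntegral_eq_integral_of_forall_compl_eq_zero fun y hy => ?_).symm
    have hr0 : r y = 0 := image_eq_zero_of_notMem_tsupport fun ht => hy (hrsupp ht)
    rw [hr0, mul_zero]
  have step1 : ∫ y in S, h y ≤ ∫ y in S, f (x - y) * r y :=
    setIntegral_mono_ae hhint hgint hineq
  have hr_seq : ∫ y in S, r y = ∫ y, r y :=
    setIntegral_eq_integral_of_forall_compl_eq_zero fun y hy =>
      image_eq_zero_of_notMem_tsupport fun ht => hy (hrsupp ht)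
  have hrneg_seq : ∫ y in S, max (-(r y)) 0 = ∫ y, max (-(r y)) 0 :=
    setIntegral_eq_integral_of_forall_compl_eq_zero fun y hy => by
      have hr0 : r y = 0 := image_eq_zero_of_notMem_tsupport fun ht => hy (hrsupp ht)
      simp [hr0]
  have hrneg_val : ∫ y, max (-(r y)) 0 = ((∫ y, |r y|) - ∫ y, r y) / 2 := by
    rw [← integral_sub hrint.abs hrint, ← integral_div]
    refine integral_congr_ae (Filter.Eventually.of_forall fun y => ?_)
    show max (-(r y)) 0 = (|r y| - r y) / 2
    rcases le_or_gt 0 (r y) with h0 | h0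
    · rw [max_eq_right (by linarith), abs_of_nonneg h0]; ring
    · rw [max_eq_left (by linarith), abs_of_neg h0]; ring
  have hsplit : ∫ y in S, h y = C * (∫ y, r y) - (M - C) * (∫ y, max (-(r y)) 0) := by
    have i1 : IntegrableOn (fun y => C * r y) S :=
      (continuous_const.mul hrc).continuousOn.integrableOn_compact hScpt
    have i2 : IntegrableOn (fun y => (M - C) * max (-(r y)) 0) S :=
      (continuous_const.mul ((hrc.neg).max continuous_const)).continuousOn.integrableOn_compact hScpt
    calc ∫ y in S, h y
        = (∫ y in S, C * r y) - ∫ y in S, (M - C) * max (-(r y)) 0 :=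
          integral_sub i1 i2
      _ = C * (∫ y in S, r y) - (M - C) * ∫ y in S, max (-(r y)) 0 := by
          rw [integral_const_mul, integral_const_mul]
      _ = C * (∫ y, r y) - (M - C) * (∫ y, max (-(r y)) 0) := by
          rw [hr_seq, hrneg_seq]
  have hIA : (∫ z, r z) ≤ ∫ z, |r z| :=
    integral_mono hrint hrint.abs fun y => le_abs_self _
  have hIlow : 1 - η ≤ ∫ z, r z := by
    have := abs_lt.1 hIclose
    linarith [this.1]
  rw [hconv]
  refine le_trans ?_ step1
  rw [hsplit, hrneg_val]
  have hb1 : C * (1 - η) ≤ C * (∫ z, r z) := mul_le_mul_of_nonneg_left hIlow hCpos.le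
  have hb2 : (M - C) * (((∫ z, |r z|) - ∫ z, r z) / 2) ≤ (M - C) * η :=
    mul_le_mul_of_nonneg_left (by linarith) (by linarith)
  nlinarith [mul_le_mul_of_nonneg_left hη14 hCpos.le]
end

section
/- Let g be a nondegenerate, stable gt-regular metric on Ω ⊆ ℝ^n (symmetric matrix field with entries in H^1_loc ∩ L^∞_loc, |det g| ≥ C_K > 0 a.e. on each compact K, and satisfying the stability condition), and let g_ε be the entrywise smoothing of g with an admissible mollifier. Then det(g_ε) is uniformly nonvanishing on compact sets: for every compact K there exist C'_K > 0 and ε₀(K) with |det(g_ε(x))| ≥ C'_K for all x ∈ K and all ε ≤ ε₀(K). -/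
open MeasureTheory Filter Set Metric

/-- Entrywise smoothing of a matrix-valued map. -/
noncomputable def smoothedMatrix {n : ℕ} (g : (Fin n → ℝ) → Matrix (Fin n) (Fin n) ℝ)
    (ρ : ℝ → (Fin n → ℝ) → ℝ) (ε : ℝ) (x : Fin n → ℝ) : Matrix (Fin n) (Fin n) ℝ :=
  Matrix.of fun i j => conv (fun y => g y i j) (ρ ε) x

section SpectralLemmas

variable {n : ℕ}

lemma repr_toEuclideanLin {C : Matrix (Fin n) (Fin n) ℝ} (hC : C.IsHermitian)
    (v : EuclideanSpace ℝ (Fin n)) (i : Fin n) :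
    hC.eigenvectorBasis.repr (Matrix.toEuclideanLin C v) i
      = hC.eigenvalues i * hC.eigenvectorBasis.repr v i := by
  have hsymm := (Matrix.isHermitian_iff_isSymmetric).1 hC
  rw [OrthonormalBasis.repr_apply_apply, OrthonormalBasis.repr_apply_apply,
    ← hsymm (hC.eigenvectorBasis i) v]
  have h1 : Matrix.toEuclideanLin C (hC.eigenvectorBasis i)
      = hC.eigenvalues i • hC.eigenvectorBasis i := by
    apply (WithLp.equiv 2 (Fin n → ℝ)).injective
    simpa [Matrix.toEuclideanLin_apply] using hC.mulVec_eigenvectorBasis i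
  rw [h1, inner_smul_left]
  simp [real_inner_comm]

lemma norm_le_norm_toEuclideanLin {C : Matrix (Fin n) (Fin n) ℝ} (hC : C.IsHermitian)
    {μ : ℝ} (hμ : 0 ≤ μ) (hev : ∀ i, μ ≤ |hC.eigenvalues i|)
    (v : EuclideanSpace ℝ (Fin n)) :
    μ * ‖v‖ ≤ ‖Matrix.toEuclideanLin C v‖ := by
  set b := hC.eigenvectorBasis
  have h1 : ‖Matrix.toEuclideanLin C v‖ = ‖b.repr (Matrix.toEuclideanLin C v)‖ :=
    (b.repr.norm_map _).symm
  have h2 : ‖v‖ = ‖b.repr v‖ := (b.repr.norm_map _).symm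
  rw [h1, h2, EuclideanSpace.norm_eq, EuclideanSpace.norm_eq, ← Real.sqrt_sq hμ,
    ← Real.sqrt_mul (by positivity)]
  apply Real.sqrt_le_sqrt
  rw [Finset.mul_sum]
  apply Finset.sum_le_sum
  intro i _
  rw [repr_toEuclideanLin hC v i]
  have h3 : ‖hC.eigenvalues i * b.repr v i‖ ^ 2 = (hC.eigenvalues i)^2 * ‖b.repr v i‖^2 := by
    rw [norm_mul, mul_pow]; rw [Real.norm_eq_abs, sq_abs]
  rw [h3]
  have h4 : μ^2 ≤ (hC.eigenvalues i)^2 := by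
    nlinarith [hev i, abs_nonneg (hC.eigenvalues i), sq_abs (hC.eigenvalues i)]
  nlinarith [norm_nonneg (b.repr v i), sq_nonneg (b.repr v i)]

lemma norm_toEuclideanLin_le {M : Matrix (Fin n) (Fin n) ℝ} {β : ℝ} (hβ : 0 ≤ β)
    (h : ∀ i j, |M i j| ≤ β) (v : EuclideanSpace ℝ (Fin n)) :
    ‖Matrix.toEuclideanLin M v‖ ≤ (n * β) * ‖v‖ := by
  have key : ∀ i, |(Matrix.toEuclideanLin M v) i| ^ 2 ≤ β^2 * (n * ∑ j, ‖v j‖^2) := by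
    intro i
    have h1 : (Matrix.toEuclideanLin M v) i = ∑ j, M i j * v j := rfl
    have h2 : |(Matrix.toEuclideanLin M v) i| ≤ β * ∑ j, |v j| := by
      rw [h1]
      calc |∑ j, M i j * v j| ≤ ∑ j, |M i j * v j| := Finset.abs_sum_le_sum_abs _ _
        _ ≤ ∑ j, β * |v j| := by
            apply Finset.sum_le_sum; intro j _
            rw [abs_mul]
            exact mul_le_mul_of_nonneg_right (h i j) (abs_nonneg _)
        _ = β * ∑ j, |v j| := by rw [Finset.mul_sum]
    have h3 : (∑ j, |v j|)^2 ≤ n * ∑ j, ‖v j‖^2 := by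
      have := sq_sum_le_card_mul_sum_sq (s := (Finset.univ : Finset (Fin n))) (f := fun j => |v j|)
      simpa [sq_abs, Real.norm_eq_abs] using this
    have h4 : 0 ≤ β * ∑ j, |v j| := by positivity
    nlinarith [abs_nonneg ((Matrix.toEuclideanLin M v) i), sq_nonneg (∑ j, |v j|)]
  rw [EuclideanSpace.norm_eq, EuclideanSpace.norm_eq]
  have h5 : ∑ i, ‖(Matrix.toEuclideanLin M v) i‖^2 ≤ (n*β)^2 * ∑ j, ‖v j‖^2 := by
    calc ∑ i, ‖(Matrix.toEuclideanLin M v) i‖^2 ≤ ∑ _i : Fin n, β^2 * (n * ∑ j, ‖v j‖^2) := by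
          apply Finset.sum_le_sum; intro i _
          simpa [Real.norm_eq_abs] using key i
      _ = (n*β)^2 * ∑ j, ‖v j‖^2 := by
          simp [Finset.sum_const]; ring
  calc Real.sqrt (∑ i, ‖(Matrix.toEuclideanLin M v) i‖^2)
      ≤ Real.sqrt ((n*β)^2 * ∑ j, ‖v j‖^2) := Real.sqrt_le_sqrt h5
    _ = (n*β) * Real.sqrt (∑ j, ‖v j‖^2) := by
        rw [Real.sqrt_mul (by positivity), Real.sqrt_sq (by positivity)]

lemma det_lower_of_perturb {B C : Matrix (Fin n) (Fin n) ℝ}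
    (hB : B.IsHermitian) (hC : C.IsHermitian) {μ β c : ℝ}
    (hc : 0 ≤ c) (hβ : 0 ≤ β)
    (hev : ∀ i, μ ≤ |hC.eigenvalues i|)
    (hent : ∀ i j, |B i j - C i j| ≤ β)
    (hcle : c ≤ μ - n * β) :
    c ^ n ≤ |B.det| := by
  have hμ : 0 ≤ μ := by nlinarith [Nat.cast_nonneg (α := ℝ) n]
  have hlow : ∀ v : EuclideanSpace ℝ (Fin n), c * ‖v‖ ≤ ‖Matrix.toEuclideanLin B v‖ := by
    intro v
    have h1 : Matrix.toEuclideanLin C v =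
        Matrix.toEuclideanLin B v - Matrix.toEuclideanLin (B - C) v := by
      rw [← LinearMap.sub_apply, ← map_sub, sub_sub_cancel]
    have h2 := norm_le_norm_toEuclideanLin hC hμ hev v
    have h3 := norm_toEuclideanLin_le hβ (M := B - C) (fun i j => hent i j) v
    have h4 : ‖Matrix.toEuclideanLin C v‖ ≤
        ‖Matrix.toEuclideanLin B v‖ + ‖Matrix.toEuclideanLin (B - C) v‖ := by
      rw [h1]; exact norm_sub_le _ _
    nlinarith [norm_nonneg v]
  have heigB : ∀ i, c ≤ |hB.eigenvalues i| := by
    intro i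
    have hu : ‖(hB.eigenvectorBasis i : EuclideanSpace ℝ (Fin n))‖ = 1 :=
      hB.eigenvectorBasis.orthonormal.1 i
    have h1 : Matrix.toEuclideanLin B (hB.eigenvectorBasis i)
        = hB.eigenvalues i • (hB.eigenvectorBasis i : EuclideanSpace ℝ (Fin n)) := by
      apply (WithLp.equiv 2 (Fin n → ℝ)).injective
      simpa [Matrix.toEuclideanLin_apply] using hB.mulVec_eigenvectorBasis i
    have := hlow (hB.eigenvectorBasis i)
    rw [h1, norm_smul, hu, Real.norm_eq_abs] at this
    simpa using this
  have hdet : B.det = ∏ i, hB.eigenvalues i := by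
    simpa using hB.det_eq_prod_eigenvalues
  rw [hdet, Finset.abs_prod]
  calc c ^ n = ∏ _i : Fin n, c := by simp
    _ ≤ ∏ i, |hB.eigenvalues i| :=
        Finset.prod_le_prod (fun _ _ => hc) (fun i _ => heigB i)

end SpectralLemmas

lemma conv_sub_const_integral_le {n : ℕ} {δ : ℝ}
    (f ψ : (Fin n → ℝ) → ℝ) (x : Fin n → ℝ)
    (hψc : Continuous ψ) (hψs : HasCompactSupport ψ)
    (hsupp : tsupport ψ ⊆ Metric.closedBall 0 δ)
    (hf : MeasureTheory.IntegrableOn f (Metric.closedBall x δ))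
    {r C3 : ℝ} (hC3 : 0 ≤ C3)
    (hae : ∀ᵐ z, z ∈ Metric.closedBall x δ → |f z - r| ≤ C3) :
    |conv f ψ x - r * ∫ y, ψ y| ≤ C3 * ∫ y, |ψ y| := by
  have hψx : Continuous fun z => ψ (x - z) :=
    hψc.comp (continuous_const.sub continuous_id)
  have hψxs : HasCompactSupport fun z => ψ (x - z) := by
    have := hψs.comp_homeomorph (Homeomorph.subLeft x)
    exact this
  have hsupp' : ∀ z, z ∉ Metric.closedBall x δ → ψ (x - z) = 0 := by
    intro z hz
    by_contra h
    apply hz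
    have : x - z ∈ tsupport ψ := subset_tsupport ψ h
    have h2 := hsupp this
    rw [Metric.mem_closedBall] at h2 ⊢
    rw [dist_zero_right] at h2
    rw [dist_eq_norm]
    simpa [norm_sub_rev] using h2
  have hc1 : conv f ψ x = ∫ z, f z * ψ (x - z) := by
    rw [conv, ← integral_sub_left_eq_self (fun z => f z * ψ (x - z)) volume x]
    simp [sub_sub_cancel]
  have hc2 : (∫ y, ψ y) = ∫ z, ψ (x - z) := by
    rw [← integral_sub_left_eq_self (fun z => ψ (x - z)) volume x]
    simp [sub_sub_cancel]
  have hc3 : (∫ y, |ψ y|) = ∫ z, |ψ (x - z)| := by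
    rw [← integral_sub_left_eq_self (fun z => |ψ (x - z)|) volume x]
    simp [sub_sub_cancel]
  have hψbd : ∃ C, ∀ z, ‖ψ (x - z)‖ ≤ C := by
    obtain ⟨C, hC⟩ := hψs.exists_bound_of_continuous hψc
    exact ⟨C, fun z => hC _⟩
  have hfi : Integrable (fun z => f z * ψ (x - z)) := by
    apply IntegrableOn.integrable_of_forall_notMem_eq_zero (s := Metric.closedBall x δ)
    · have : IntegrableOn (fun z => ψ (x - z) * f z) (Metric.closedBall x δ) :=
        Integrable.bdd_mul hf (hψx.aestronglyMeasurable.restrict)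
          (ae_of_all _ hψbd.choose_spec)
      exact this.congr_fun (fun z _ => mul_comm _ _) measurableSet_closedBall
    · intro z hz; rw [hsupp' z hz, mul_zero]
  have hψi : Integrable (fun z => ψ (x - z)) :=
    hψx.integrable_of_hasCompactSupport hψxs
  have hψai : Integrable (fun z => |ψ (x - z)|) := hψi.abs
  have hui : Integrable (fun z => (f z - r) * ψ (x - z)) := by
    have := hfi.sub (hψi.const_mul r)
    exact this.congr (Filter.Eventually.of_forall fun z => by
      simp only [Pi.sub_apply]; ring)
  have hkey : conv f ψ x - r * ∫ y, ψ y = ∫ z, (f z - r) * ψ (x - z) := by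
    rw [hc1, hc2, ← integral_const_mul, ← integral_sub hfi ((hψi.const_mul r))]
    congr 1; funext z; ring
  rw [hkey, hc3]
  calc |∫ z, (f z - r) * ψ (x - z)| ≤ ∫ z, |(f z - r) * ψ (x - z)| := by
        have := norm_integral_le_integral_norm (μ := volume)
          (fun z => (f z - r) * ψ (x - z))
        simpa [Real.norm_eq_abs, abs_mul] using this
    _ ≤ ∫ z, C3 * |ψ (x - z)| := by
        apply integral_mono_ae hui.abs (hψai.const_mul C3)
        filter_upwards [hae] with z hz
        by_cases hzb : z ∈ Metric.closedBall x δ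
        · rw [abs_mul]
          exact mul_le_mul_of_nonneg_right (hz hzb) (abs_nonneg _)
        · rw [hsupp' z hzb]; simp [abs_nonneg, hC3]
    _ = C3 * ∫ z, |ψ (x - z)| := integral_const_mul _ _

/-- Let `g` be a nondegenerate, stable gt-regular metric on `Ω`
(symmetric matrix field with entries in `H^1_loc ∩ L^∞_loc`, `|det g| ≥ C_K > 0` a.e.
on every compact `K`, and satisfying the stability condition: on each compact `K`
there are `μ > 0` bounding all eigenvalues of `g` away from zero a.e. and a continuous
matrix field `A` with `|g_{ij} − A_{ij}| ≤ C'' < μ/(2n)` a.e. on `K`). Then the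
determinant of the smoothing with an admissible mollifier is uniformly nonvanishing on
compact sets. -/
theorem det_of_smoothed_metric_uniformly_nonvanishing {n : ℕ}
    (Ω : Set (Fin n → ℝ)) (hΩ : IsOpen Ω)
    (ρ : ℝ → (Fin n → ℝ) → ℝ) (hρ : Admissible ρ)
    (g : (Fin n → ℝ) → Matrix (Fin n) (Fin n) ℝ)
    (hsym : ∀ x, (g x).IsHermitian)
    (Dg : Fin n → Fin n → Fin n → (Fin n → ℝ) → ℝ)
    (hgi : ∀ i j, LocallyIntegrableOn (fun x => g x i j) Ω)
    (hgb : ∀ i j, LocBdd Ω (fun x => g x i j))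
    (hg2 : ∀ i j, LocLp Ω 2 (fun x => g x i j))
    (hDg2 : ∀ i j l, LocLp Ω 2 (Dg i j l))
    (hDg : ∀ i j l, HasWeakDeriv Ω (fun x => g x i j) l (Dg i j l))
    (hnd : ∀ K ⊆ Ω, IsCompact K → ∃ C > (0:ℝ), ∀ᵐ x, x ∈ K → C ≤ |(g x).det|)
    (hstab : ∀ K ⊆ Ω, IsCompact K → ∃ μ > (0:ℝ),
      (∀ i, ∀ᵐ x, x ∈ K → μ ≤ |(hsym x).eigenvalues i|) ∧
      ∃ A : (Fin n → ℝ) → Matrix (Fin n) (Fin n) ℝ,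
        (∀ i j, ContinuousOn (fun x => A x i j) K) ∧
        ∃ C'' : ℝ, (∀ i j, ∀ᵐ x, x ∈ K → |g x i j - A x i j| ≤ C'') ∧
          C'' < μ / (2 * n)) :
    ∀ K ⊆ Ω, IsCompact K → ∃ C' > (0:ℝ), ∃ ε₀ > (0:ℝ),
      ∀ ε ∈ Set.Ioc (0:ℝ) 1, ε ≤ ε₀ → ∀ x ∈ K,
        C' ≤ |(smoothedMatrix g ρ ε x).det| := by
  intro K hKΩ hKc
  -- trivial cases
  rcases Nat.eq_zero_or_pos n with hn | hn
  · refine ⟨1, one_pos, 1, one_pos, fun ε _ _ x _ => ?_⟩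
    subst hn
    have : (smoothedMatrix g ρ ε x).det = 1 := Matrix.det_isEmpty
    rw [this]; norm_num
  rcases K.eq_empty_or_nonempty with rfl | hKne
  · exact ⟨1, one_pos, 1, one_pos, fun ε _ _ x hx => absurd hx (notMem_empty x)⟩
  have hnR : (0:ℝ) < n := by exact_mod_cast hn
  -- a compact neighborhood L of K inside Ω
  obtain ⟨δ₀, hδ₀, hLsub⟩ := hKc.exists_cthickening_subset_open hΩ hKΩ
  obtain ⟨L, hLdef⟩ : ∃ L : Set (Fin n → ℝ), L = cthickening δ₀ K := ⟨_, rfl⟩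
  rw [← hLdef] at hLsub
  have hLc : IsCompact L := hLdef ▸ hKc.cthickening
  have hKL : K ⊆ L := hLdef ▸ self_subset_cthickening K
  -- stability data on L
  obtain ⟨μ, hμ, heig, A, hAcont, C'', hgA, hC''⟩ := hstab L hLsub hLc
  obtain ⟨C2, hC2def⟩ : ∃ C2 : ℝ, C2 = max C'' 0 := ⟨_, rfl⟩
  have hC2nonneg : 0 ≤ C2 := hC2def ▸ le_max_right _ _
  have hC2lt : C2 < μ / (2 * n) := hC2def ▸ max_lt hC'' (by positivity)
  obtain ⟨τ, hτdef⟩ : ∃ τ : ℝ, τ = μ / (2 * n) - C2 := ⟨_, rfl⟩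
  have hτ : 0 < τ := by rw [hτdef]; linarith
  have hgA2 : ∀ i j, ∀ᵐ z, z ∈ L → |g z i j - A z i j| ≤ C2 := by
    intro i j
    filter_upwards [hgA i j] with z hz hzL
    exact (hz hzL).trans (hC2def ▸ le_max_left _ _)
  -- uniform bound on A over L, via the uncurried matrix-entry function
  have hFcont : ContinuousOn
      (fun x => (fun p : Fin n × Fin n => A x p.1 p.2)) L := by
    apply continuousOn_pi.2
    intro p
    exact hAcont p.1 p.2
  obtain ⟨M₀, hM₀⟩ := hLc.exists_bound_of_continuousOn hFcont
  obtain ⟨MA, hMAdef⟩ : ∃ MA : ℝ, MA = max M₀ 0 := ⟨_, rfl⟩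
  have hMAnonneg : 0 ≤ MA := hMAdef ▸ le_max_right _ _
  have hMA : ∀ z ∈ L, ∀ i j, |A z i j| ≤ MA := by
    intro z hz i j
    have h1 := hM₀ z hz
    have h2 : |A z i j| ≤ ‖(fun p : Fin n × Fin n => A z p.1 p.2)‖ := by
      have := norm_le_pi_norm (fun p : Fin n × Fin n => A z p.1 p.2) (i, j)
      simpa [Real.norm_eq_abs] using this
    exact h2.trans (h1.trans (hMAdef ▸ le_max_left _ _))
  -- uniform continuity of A on L
  have hFuc := hLc.uniformContinuousOn_of_continuous hFcont
  obtain ⟨δ₁, hδ₁, hucont⟩ := (Metric.uniformContinuousOn_iff).1 hFuc (τ/8) (by positivity)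
  have hAuc : ∀ z ∈ L, ∀ w ∈ L, dist z w < δ₁ → ∀ i j, |A z i j - A w i j| ≤ τ/8 := by
    intro z hz w hw hd i j
    have h1 := hucont z hz w hw hd
    have h2 : dist (A z i j) (A w i j) ≤
        dist (fun p : Fin n × Fin n => A z p.1 p.2)
          (fun p : Fin n × Fin n => A w p.1 p.2) :=
      dist_le_pi_dist (fun p : Fin n × Fin n => A z p.1 p.2)
        (fun p : Fin n × Fin n => A w p.1 p.2) (i, j)
    rw [Real.dist_eq] at h2
    exact h2.trans (le_of_lt h1)
  -- choice of δ
  obtain ⟨δ, hδdef⟩ : ∃ δ : ℝ, δ = min δ₀ δ₁ / 2 := ⟨_, rfl⟩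
  have hδpos : 0 < δ := by rw [hδdef]; positivity
  have hδleδ₀ : δ ≤ δ₀ := by
    rw [hδdef]; have := min_le_left δ₀ δ₁; linarith
  have hδltδ₁ : δ < δ₁ := by
    rw [hδdef]; have := min_le_right δ₀ δ₁; linarith
  have hBallL : ∀ x ∈ K, Metric.closedBall x δ ⊆ L := by
    intro x hx
    rw [hLdef]
    exact (closedBall_subset_cthickening hx δ).trans (cthickening_mono hδleδ₀ K)
  -- mollifier parameters
  obtain ⟨net, hsmall⟩ := hρ
  obtain ⟨η, hηdef⟩ : ∃ η : ℝ, η = min 1 (τ / (8 * (C2 + 1))) := ⟨_, rfl⟩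
  have hηpos : 0 < η := by
    rw [hηdef]; apply lt_min one_pos; positivity
  have hη1 : η ≤ 1 := hηdef ▸ min_le_left _ _
  have hη2 : η ≤ τ / (8 * (C2 + 1)) := hηdef ▸ min_le_right _ _
  obtain ⟨ε₁, hε₁, hηB⟩ := hsmall η hηpos
  obtain ⟨ε₂, hε₂, hsupp⟩ := net.supp_shrink δ hδpos
  obtain ⟨r, hrdef⟩ : ∃ r : ℝ, r = τ / (8 * (MA + 1)) := ⟨_, rfl⟩
  have hrpos : 0 < r := by rw [hrdef]; positivity
  obtain ⟨ε₃, hε₃, hI1⟩ : ∃ ε₃ > (0:ℝ), ∀ ε ∈ Set.Ioc (0:ℝ) 1, ε ≤ ε₃ →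
      |(∫ y, ρ ε y) - 1| ≤ r := by
    have h1 : ∀ᶠ ε in nhdsWithin 0 (Set.Ioc (0:ℝ) 1), dist (∫ y, ρ ε y) 1 < r :=
      Metric.tendsto_nhds.mp net.integral_one r hrpos
    rw [eventually_nhdsWithin_iff] at h1
    obtain ⟨d, hd, hdp⟩ := Metric.eventually_nhds_iff.mp h1
    refine ⟨d/2, by positivity, fun ε hε hεd => ?_⟩
    have h2 : dist ε (0:ℝ) < d := by
      rw [Real.dist_eq, sub_zero, abs_of_pos hε.1]
      linarith [hε.1]
    have := hdp h2 hε
    rw [Real.dist_eq] at this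
    exact this.le
  refine ⟨(n * τ)^n, by positivity, min ε₁ (min ε₂ ε₃), by positivity, ?_⟩
  intro ε hεIoc hεle x hx
  have hεle₁ : ε ≤ ε₁ := hεle.trans (min_le_left _ _)
  have hεle₂ : ε ≤ ε₂ := hεle.trans ((min_le_right _ _).trans (min_le_left _ _))
  have hεle₃ : ε ≤ ε₃ := hεle.trans ((min_le_right _ _).trans (min_le_right _ _))
  have hψc : Continuous (ρ ε) := (net.smooth ε hεIoc).continuous
  have hψs : HasCompactSupport (ρ ε) := net.cpt_supp ε hεIoc
  have hψsupp : tsupport (ρ ε) ⊆ Metric.closedBall 0 δ := hsupp ε hεIoc hεle₂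
  have hIabs : ∫ y, |ρ ε y| ≤ 1 + η := hηB ε hεIoc hεle₁
  have hIabs0 : (0:ℝ) ≤ ∫ y, |ρ ε y| := integral_nonneg (fun y => abs_nonneg _)
  have hIdist : |(∫ y, ρ ε y) - 1| ≤ r := hI1 ε hεIoc hεle₃
  have hxL : x ∈ L := hKL hx
  -- entrywise estimate between the smoothed matrix and A x
  have hconvA : ∀ i j, |conv (fun y => g y i j) (ρ ε) x - A x i j| ≤ C2 + τ/2 := by
    intro i j
    have hf : IntegrableOn (fun y => g y i j) (Metric.closedBall x δ) :=
      (hgi i j).integrableOn_compact_subset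
        ((hBallL x hx).trans hLsub) (isCompact_closedBall x δ)
    have hae : ∀ᵐ z, z ∈ Metric.closedBall x δ → |g z i j - A x i j| ≤ C2 + τ/8 := by
      filter_upwards [hgA2 i j] with z hz hzball
      have hzL : z ∈ L := hBallL x hx hzball
      have h1 : |g z i j - A z i j| ≤ C2 := hz hzL
      have h2 : dist z x < δ₁ := lt_of_le_of_lt (Metric.mem_closedBall.1 hzball) hδltδ₁
      have h3 : |A z i j - A x i j| ≤ τ/8 := hAuc z hzL x hxL h2 i j
      calc |g z i j - A x i j| = |(g z i j - A z i j) + (A z i j - A x i j)| := by ring_nf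
        _ ≤ |g z i j - A z i j| + |A z i j - A x i j| := abs_add_le _ _
        _ ≤ C2 + τ/8 := add_le_add h1 h3
    have hest := conv_sub_const_integral_le (fun y => g y i j) (ρ ε) x hψc hψs hψsupp hf
      (r := A x i j) (C3 := C2 + τ/8) (by positivity) hae
    have hq : τ/8 = (C2+1) * (τ/(8*(C2+1))) := by
      field_simp
    have h2 : C2 * η ≤ τ/8 := by
      calc C2 * η ≤ C2 * (τ / (8 * (C2 + 1))) :=
            mul_le_mul_of_nonneg_left hη2 hC2nonneg
        _ ≤ (C2 + 1) * (τ / (8 * (C2 + 1))) := by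
            apply mul_le_mul_of_nonneg_right (by linarith) (by positivity)
        _ = τ/8 := hq.symm
    have h3 : (τ/8) * η ≤ τ/8 := mul_le_of_le_one_right (by positivity) hη1
    have hexp : (C2 + τ/8) * (1+η) = C2 + τ/8 + C2*η + (τ/8)*η := by ring
    have hstep1 : (C2 + τ/8) * ∫ y, |ρ ε y| ≤ C2 + τ/8 + τ/4 := by
      have h1 : (C2 + τ/8) * ∫ y, |ρ ε y| ≤ (C2 + τ/8) * (1 + η) :=
        mul_le_mul_of_nonneg_left hIabs (by positivity)
      linarith
    have hrbound : MA * r ≤ τ/8 := by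
      have hq2 : (MA + 1) * r = τ/8 := by
        rw [hrdef]; field_simp
      calc MA * r ≤ (MA + 1) * r := by
            apply mul_le_mul_of_nonneg_right (by linarith) hrpos.le
        _ = τ/8 := hq2
    have hAxb : |A x i j| ≤ MA := hMA x hxL i j
    calc |conv (fun y => g y i j) (ρ ε) x - A x i j|
        = |(conv (fun y => g y i j) (ρ ε) x - A x i j * ∫ y, ρ ε y)
            + A x i j * ((∫ y, ρ ε y) - 1)| := by ring_nf
      _ ≤ |conv (fun y => g y i j) (ρ ε) x - A x i j * ∫ y, ρ ε y|
            + |A x i j * ((∫ y, ρ ε y) - 1)| := abs_add_le _ _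
      _ ≤ (C2 + τ/8 + τ/4) + MA * r := by
          apply add_le_add (hest.trans hstep1)
          rw [abs_mul]
          exact mul_le_mul hAxb hIdist (abs_nonneg _) hMAnonneg
      _ ≤ C2 + τ/2 := by linarith
  -- pick a good point y₀ in the ball around x
  have hGae : ∀ᵐ z, (z ∈ L → ∀ i, μ ≤ |(hsym z).eigenvalues i|) ∧
      (z ∈ L → ∀ i j, |g z i j - A z i j| ≤ C2) := by
    apply Filter.Eventually.and
    · have h1 : ∀ᵐ z, ∀ i, z ∈ L → μ ≤ |(hsym z).eigenvalues i| := ae_all_iff.2 heig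
      filter_upwards [h1] with z hz hzL i
      exact hz i hzL
    · have h1 : ∀ᵐ z, ∀ i j, z ∈ L → |g z i j - A z i j| ≤ C2 :=
        ae_all_iff.2 fun i => ae_all_iff.2 fun j => hgA2 i j
      filter_upwards [h1] with z hz hzL i j
      exact hz i j hzL
  obtain ⟨y₀, hy₀ball, hy₀⟩ : ∃ y₀, y₀ ∈ Metric.closedBall x δ ∧
      ((y₀ ∈ L → ∀ i, μ ≤ |(hsym y₀).eigenvalues i|) ∧
       (y₀ ∈ L → ∀ i j, |g y₀ i j - A y₀ i j| ≤ C2)) := by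
    by_contra hcon
    have hnull : volume {z | ¬ ((z ∈ L → ∀ i, μ ≤ |(hsym z).eigenvalues i|) ∧
        (z ∈ L → ∀ i j, |g z i j - A z i j| ≤ C2))} = 0 := ae_iff.mp hGae
    have hsubset : Metric.closedBall x δ ⊆
        {z | ¬ ((z ∈ L → ∀ i, μ ≤ |(hsym z).eigenvalues i|) ∧
          (z ∈ L → ∀ i j, |g z i j - A z i j| ≤ C2))} := by
      intro z hz
      simp only [Set.mem_setOf_eq]
      exact fun hP => hcon ⟨z, hz, hP⟩
    have h0 : volume (Metric.closedBall x δ) = 0 := measure_mono_null hsubset hnull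
    exact (measure_closedBall_pos volume x hδpos).ne' h0
  have hy₀L : y₀ ∈ L := hBallL x hx hy₀ball
  have heigy₀ : ∀ i, μ ≤ |(hsym y₀).eigenvalues i| := hy₀.1 hy₀L
  have hy₀A : ∀ i j, |g y₀ i j - A y₀ i j| ≤ C2 := hy₀.2 hy₀L
  -- entrywise bound between the smoothed matrix and g y₀
  have hentry : ∀ i j, |smoothedMatrix g ρ ε x i j - g y₀ i j| ≤ 2*C2 + 5*τ/8 := by
    intro i j
    have h0 : smoothedMatrix g ρ ε x i j = conv (fun y => g y i j) (ρ ε) x := rfl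
    have h1 : |conv (fun y => g y i j) (ρ ε) x - A x i j| ≤ C2 + τ/2 := hconvA i j
    have h2 : |A x i j - A y₀ i j| ≤ τ/8 := by
      have hd : dist x y₀ < δ₁ := by
        rw [dist_comm]
        exact lt_of_le_of_lt (Metric.mem_closedBall.1 hy₀ball) hδltδ₁
      exact hAuc x hxL y₀ hy₀L hd i j
    have h3 : |A y₀ i j - g y₀ i j| ≤ C2 := by
      rw [abs_sub_comm]; exact hy₀A i j
    calc |smoothedMatrix g ρ ε x i j - g y₀ i j|
        = |(conv (fun y => g y i j) (ρ ε) x - A x i j) + (A x i j - A y₀ i j)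
            + (A y₀ i j - g y₀ i j)| := by rw [h0]; ring_nf
      _ ≤ |(conv (fun y => g y i j) (ρ ε) x - A x i j) + (A x i j - A y₀ i j)|
            + |A y₀ i j - g y₀ i j| := abs_add_le _ _
      _ ≤ (|conv (fun y => g y i j) (ρ ε) x - A x i j| + |A x i j - A y₀ i j|)
            + |A y₀ i j - g y₀ i j| := by
          exact add_le_add (abs_add_le _ _) le_rfl
      _ ≤ (C2 + τ/2 + τ/8) + C2 := by
          apply add_le_add (add_le_add h1 h2) h3
      _ = 2*C2 + 5*τ/8 := by ring
  -- the smoothed matrix is symmetric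
  have hgsym : ∀ y i j, g y i j = g y j i := by
    intro y i j
    conv_lhs => rw [← hsym y]
    simp [Matrix.conjTranspose_apply]
  have hBsym : (smoothedMatrix g ρ ε x).IsHermitian := by
    rw [Matrix.IsHermitian]
    ext i j
    simp only [Matrix.conjTranspose_apply, star_trivial]
    show conv (fun y => g y j i) (ρ ε) x = conv (fun y => g y i j) (ρ ε) x
    unfold conv
    congr 1
    funext y
    show g (x - y) j i * ρ ε y = g (x - y) i j * ρ ε y
    rw [hgsym]
  -- conclude via the spectral perturbation bound
  have hμeq : μ = 2*(n:ℝ)*τ + 2*(n:ℝ)*C2 := by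
    have h2n : (2*(n:ℝ)) ≠ 0 := by positivity
    have hh : τ + C2 = μ / (2*(n:ℝ)) := by rw [hτdef]; ring
    field_simp at hh
    linarith
  exact det_lower_of_perturb hBsym (hsym y₀)
    (c := (n:ℝ)*τ) (β := 2*C2 + 5*τ/8)
    (by positivity) (by positivity) heigy₀ hentry
    (by nlinarith [mul_pos hnR hτ, mul_nonneg hnR.le hC2nonneg])
end
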